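/- arXiv:2005.13938 — 7 statements merged into one kernel-verified Lean document; each statement's English description precedes it below -/
import Mathlib

section
/- Let s ≥ 0 be an integer and let R be a finite tree that contains no induced subgraph isomorphic to the disjoint union of s isolated vertices and a path on 3 vertices (sP₁ + P₃). If R has no vertex of degree greater than 2, then R has at most 2s + 2 vertices. -/
open SimpleGraph

/-- The graph `sP₁ + P₃`: the disjoint union of `s` isolated vertices and a path on
3 vertices. -/
def sP1P3 (s : ℕ) : SimpleGraph (Fin s ⊕ Fin 3) :=
  SimpleGraph.fromRel (fun a b =>
    ∃ i j : Fin 3, a = Sum.inr i ∧ b = Sum.inr j ∧ (i : ℕ) + 1 = (j : ℕ))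

/-- `G` is `H`-free: no induced subgraph of `G` is isomorphic to `H`,
i.e. there is no graph embedding of `H` into `G`. -/
def HFree {W V : Type*} (H : SimpleGraph W) (G : SimpleGraph V) : Prop :=
  IsEmpty (H ↪g G)

theorem stmt_4 {V : Type*} [Fintype V] (s : ℕ) (R : SimpleGraph V)
    (htree : R.IsTree) (hfree : HFree (sP1P3 s) R)
    (hdeg : ∀ v : V, (R.neighborSet v).ncard ≤ 2) :
    Fintype.card V ≤ 2 * s + 2 := by
  classical
  by_contra hcard
  push_neg at hcard
  have hconn := htree.isConnected
  have hncard : ∀ v : V, (R.neighborSet v).ncard = R.degree v := by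
    intro v
    rw [← card_neighborSet_eq_degree, Set.ncard_eq_toFinset_card', Set.toFinset_card]
  -- a leaf exists
  obtain ⟨a, ha⟩ : ∃ a : V, (R.neighborSet a).ncard ≤ 1 := by
    by_contra h
    push_neg at h
    have h1 : 2 * Fintype.card V ≤ ∑ v : V, R.degree v := by
      calc 2 * Fintype.card V = ∑ _v : V, 2 := by
            simp [Finset.sum_const, mul_comm]
        _ ≤ ∑ v : V, R.degree v := by
            refine Finset.sum_le_sum fun v _ => ?_
            have := h v
            rw [hncard] at this
            omega
    rw [R.sum_degrees_eq_twice_card_edges] at h1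
    have h2 := htree.card_edgeFinset
    have h3 : 0 < Fintype.card V := Fintype.card_pos_iff.mpr hconn.nonempty
    omega
  -- every vertex at distance d+1 from a has a neighbor at distance d
  have hdown : ∀ (v : V) (d : ℕ), R.dist a v = d + 1 →
      ∃ u, R.Adj u v ∧ R.dist a u = d := by
    intro v d hd
    obtain ⟨p, hp⟩ := hconn.exists_walk_length_eq_dist a v
    have hnn : ¬ p.reverse.Nil := by
      rw [Walk.not_nil_iff_lt_length]
      simp [hp, hd]
    obtain ⟨u, hadj, q, hq⟩ := Walk.not_nil_iff.mp hnn
    refine ⟨u, hadj.symm, ?_⟩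
    have hql : q.length = d := by
      have := congrArg Walk.length hq
      simp [hp, hd] at this
      omega
    have h1 : R.dist a u ≤ d := by
      have := R.dist_le q.reverse
      simpa [hql] using this
    have ht := hconn.dist_triangle (u := a) (v := u) (w := v)
    have h2 : R.dist u v = 1 := dist_eq_one_iff_adj.mpr hadj.symm
    omega
  -- dist a is injective
  have key : ∀ d : ℕ, ∀ u v : V, R.dist a u = d → R.dist a v = d → u = v := by
    intro d
    induction d with
    | zero =>
      intro u v hu hv
      have h1 := (hconn.dist_eq_zero_iff).mp hu
      have h2 := (hconn.dist_eq_zero_iff).mp hv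
      rw [← h1, ← h2]
    | succ d ih =>
      intro u v hu hv
      by_contra hne
      obtain ⟨u', hu', hud⟩ := hdown u d hu
      obtain ⟨v', hv', hvd⟩ := hdown v d hv
      have hw : u' = v' := ih u' v' hud hvd
      subst hw
      cases d with
      | zero =>
        have hua : u' = a := ((hconn.dist_eq_zero_iff).mp hud).symm
        subst hua
        have hsub : ({u, v} : Set V) ⊆ R.neighborSet u' := by
          rintro x (rfl | rfl)
          · exact hu'
          · exact hv'
        have h2 : 2 ≤ (R.neighborSet u').ncard := by
          have := Set.ncard_le_ncard hsub (Set.toFinite _)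
          rwa [Set.ncard_pair hne] at this
        omega
      | succ e =>
        obtain ⟨w, hw', hwd⟩ := hdown u' e hud
        have h1 : w ≠ u := by
          intro h
          rw [h] at hwd
          omega
        have h2 : w ≠ v := by
          intro h
          rw [h] at hwd
          omega
        have hsub : ({w, u, v} : Set V) ⊆ R.neighborSet u' := by
          rintro x (rfl | rfl | rfl)
          · exact hw'.symm
          · exact hu'
          · exact hv'
        have h3 : ({w, u, v} : Set V).ncard = 3 :=
          Set.ncard_eq_three.mpr ⟨w, u, v, h1, h2, hne, rfl⟩
        have h4 := Set.ncard_le_ncard hsub (Set.toFinite _)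
        have h5 := hdeg u'
        omega
  set n := Fintype.card V with hn
  have hdistlt : ∀ v, R.dist a v < n := by
    intro v
    obtain ⟨p, hp, hl⟩ := hconn.exists_path_of_dist a v
    rw [← hl]
    exact hp.length_lt
  let f : V → Fin n := fun v => ⟨R.dist a v, hdistlt v⟩
  have hfinj : Function.Injective f := by
    intro u v h
    have hval : R.dist a u = R.dist a v := congrArg Fin.val h
    exact key _ u v hval rfl
  have hfbij : Function.Bijective f :=
    (Fintype.bijective_iff_injective_and_card f).mpr ⟨hfinj, by simp [hn]⟩
  let e := Equiv.ofBijective f hfbij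
  let g : Fin n → V := e.symm
  have hg : ∀ i : Fin n, R.dist a (g i) = i := by
    intro i
    have : f (g i) = i := e.apply_symm_apply i
    exact congrArg Fin.val this
  have hginj : Function.Injective g := e.symm.injective
  have hstep : ∀ i j : Fin n, (i : ℕ) + 1 = (j : ℕ) → R.Adj (g i) (g j) := by
    intro i j hij
    obtain ⟨u, hu, hud⟩ := hdown (g j) i (by rw [hg]; omega)
    have hug : u = g i := key _ u (g i) hud (hg i)
    exact hug ▸ hu
  have hnadj : ∀ i j : Fin n, R.Adj (g i) (g j) →
      ((i : ℕ) + 1 = (j : ℕ) ∨ (j : ℕ) + 1 = (i : ℕ)) := by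
    intro i j hadj
    have h1 : R.dist (g i) (g j) = 1 := dist_eq_one_iff_adj.mpr hadj
    have h2 : R.dist (g j) (g i) = 1 := dist_eq_one_iff_adj.mpr hadj.symm
    have t1 := hconn.dist_triangle (u := a) (v := g i) (w := g j)
    have t2 := hconn.dist_triangle (u := a) (v := g j) (w := g i)
    have hvne : (i : ℕ) ≠ (j : ℕ) := fun h => hadj.ne (congrArg g (Fin.ext h))
    have hgi := hg i
    have hgj := hg j
    omega
  -- build the forbidden embedding
  let idx : Fin s ⊕ Fin 3 → ℕ := Sum.elim (fun k => 2 * (k : ℕ) + 4) (fun i => (i : ℕ))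
  have hidx : ∀ x, idx x < n := by
    rintro (k | i)
    · have := k.isLt
      simp only [idx, Sum.elim_inl]
      omega
    · have := i.isLt
      simp only [idx, Sum.elim_inr]
      omega
  let m : Fin s ⊕ Fin 3 → V := fun x => g ⟨idx x, hidx x⟩
  have hminj : Function.Injective m := by
    intro x y hxy
    have hval : idx x = idx y := congrArg Fin.val (hginj hxy)
    rcases x with k | i <;> rcases y with k' | i' <;>
      simp only [idx, Sum.elim_inl, Sum.elim_inr] at hval
    · have hk : (k : ℕ) = (k' : ℕ) := by omega
      exact congrArg Sum.inl (Fin.ext hk)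
    · exact absurd hval (by have := i'.isLt; omega)
    · exact absurd hval (by have := i.isLt; omega)
    · exact congrArg Sum.inr (Fin.ext hval)
  refine hfree.false ⟨⟨m, hminj⟩, ?_⟩
  intro x y
  show R.Adj (m x) (m y) ↔ (sP1P3 s).Adj x y
  constructor
  · intro hadj
    have := hnadj _ _ hadj
    simp only [idx] at this
    rcases x with k | i <;> rcases y with k' | i' <;>
      simp only [Sum.elim_inl, Sum.elim_inr] at this
    · exact absurd this (by omega)
    · exact absurd this (by have := i'.isLt; omega)
    · exact absurd this (by have := i.isLt; omega)
    · simp only [sP1P3, fromRel_adj]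
      refine ⟨?_, ?_⟩
      · intro h
        have : (i : ℕ) = (i' : ℕ) := congrArg (fun z => (Sum.elim (fun _ : Fin s => 0) Fin.val z : ℕ)) h
        omega
      · rcases this with h | h
        · exact Or.inl ⟨i, i', rfl, rfl, h⟩
        · exact Or.inr ⟨i', i, rfl, rfl, h⟩
  · intro hadj
    simp only [sP1P3, fromRel_adj] at hadj
    obtain ⟨hne, h | h⟩ := hadj <;>
      obtain ⟨i, j, rfl, rfl, hij⟩ := h
    · exact hstep _ _ (by simp only [idx, Sum.elim_inr]; exact hij)
    · exact (hstep _ _ (by simp only [idx, Sum.elim_inr]; exact hij)).symm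
end

section
/- Let s ≥ 1 be an integer and let R be a finite tree with no induced subgraph isomorphic to sP₁ + P₃ (the disjoint union of s isolated vertices and a 3-vertex path). Suppose R has a vertex r of degree at least 3 such that some subtree obtained by deleting r contains a vertex of degree at least 2 in that subtree. Then R has at most 4s − 2 vertices. -/
open SimpleGraph

/-!
A tree is bipartite, so the vertices at distance at least 2 from an induced path `x - y - z`
split into two independent sets. Each of them, together with the path, induces `tP₁ + P₃` for
`t` its size, so `t < s`; hence at most `2s - 2` vertices are far from the path.
Let `C` be the component of `R - r` containing a vertex `v` with two neighbours `a, b` in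
`R - r`. Every vertex outside `C ∪ {r}` is far from `a - v - b`. Since `r` has at most one
neighbour in `C` and at least two neighbours `u, u'` outside it, every vertex of `C` except
that neighbour is far from `u - r - u'`. Hence `|R| ≤ 1 + (2s - 1) + (2s - 2) = 4s - 2`.
-/

lemma sP1P3_not_adj_inl {s : ℕ} (i : Fin s) (a : Fin s ⊕ Fin 3) :
    ¬ (sP1P3 s).Adj (Sum.inl i) a := by
  simp [sP1P3]

lemma sP1P3_adj_inr_inr {s : ℕ} (i j : Fin 3) :
    (sP1P3 s).Adj (Sum.inr i) (Sum.inr j) ↔ i ≠ j ∧ (i = 1 ∨ j = 1) := by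
  fin_cases i <;> fin_cases j <;> simp [sP1P3]

namespace SimpleGraph

variable {V : Type*} {G : SimpleGraph V}

def farFrom (G : SimpleGraph V) (S : Set V) : Set V :=
  {w | ∀ u ∈ S, w ≠ u ∧ ¬ G.Adj w u}

theorem ncard_lt_of_hFree_sP1P3 [Finite V] {s : ℕ} (hfree : HFree (sP1P3 s) G) {x y z : V}
    (hxy : G.Adj x y) (hyz : G.Adj y z) (hxz : ¬ G.Adj x z) (hne : x ≠ z) {A : Set V}
    (hA : G.IsIndepSet A) (hAfar : A ⊆ G.farFrom {x, y, z}) : A.ncard < s := by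
  by_contra! hsA
  let e : Fin s ↪ A := (Fin.castLEEmb (by rwa [Nat.card_coe_set_eq])).trans
    (Finite.equivFin A).symm.toEmbedding
  have hfar (i : Fin s) (j : Fin 3) :
      (e i : V) ≠ ![x, y, z] j ∧ ¬ G.Adj (e i) (![x, y, z] j) := by
    have := hAfar (e i).2
    fin_cases j <;> simp_all [farFrom]
  have hpath_inj : Function.Injective ![x, y, z] := by
    intro i j h
    fin_cases i <;> fin_cases j <;> simp_all [hxy.ne, hyz.ne, hxy.ne', hyz.ne']
  have hpath_adj (i j : Fin 3) :
      G.Adj (![x, y, z] i) (![x, y, z] j) ↔ (sP1P3 s).Adj (.inr i) (.inr j) := by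
    rw [sP1P3_adj_inr_inr]
    fin_cases i <;> fin_cases j <;> simp [hxy, hyz, hxz, hxy.symm, hyz.symm, G.adj_comm z x]
  refine hfree.false ⟨⟨Sum.elim (fun i => (e i : V)) ![x, y, z],
    (Subtype.val_injective.comp e.injective).sumElim hpath_inj fun i j => (hfar i j).1⟩, ?_⟩
  rintro (i | i) (j | j)
  · exact iff_of_false (fun h => hA (e i).2 (e j).2 h.ne h)
      (sP1P3_not_adj_inl i _)
  · exact iff_of_false (hfar i j).2 (sP1P3_not_adj_inl i _)
  · exact iff_of_false (fun h => (hfar j i).2 h.symm) (fun h => sP1P3_not_adj_inl j _ h.symm)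
  · exact hpath_adj i j

theorem Colorable.ncard_add_two_le [Finite V] (hG : G.Colorable 2) {s : ℕ} {X : Set V}
    (hX : ∀ A ⊆ X, G.IsIndepSet A → A.ncard < s) : X.ncard + 2 ≤ 2 * s := by
  obtain ⟨C⟩ := hG
  have hclass (c : Fin 2) : (X ∩ C.colorClass c).ncard < s :=
    hX _ Set.inter_subset_left ((C.isIndepSet_colorClass c).mono Set.inter_subset_right)
  have hcover : X ⊆ (X ∩ C.colorClass 0) ∪ (X ∩ C.colorClass 1) := fun w hw => by
    rcases Fin.exists_fin_two.1 ⟨C w, rfl⟩ with h | h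
    · exact .inl ⟨hw, h⟩
    · exact .inr ⟨hw, h⟩
  have := (Set.ncard_le_ncard hcover).trans (Set.ncard_union_le _ _)
  have := hclass 0
  have := hclass 1
  omega

lemma IsAcyclic.not_adj_of_adj_of_adj (hG : G.IsAcyclic) {x y z : V} (hxy : G.Adj x y)
    (hyz : G.Adj y z) : ¬ G.Adj x z := by
  classical
  exact fun hxz => hG.cliqueFree le_rfl {x, y, z} (is3Clique_triple_iff.2 ⟨hxy, hxz, hyz⟩)

theorem IsAcyclic.ncard_farFrom_add_two_le [Finite V] (hG : G.IsAcyclic) {s : ℕ}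
    (hfree : HFree (sP1P3 s) G) {x y z : V} (hxy : G.Adj x y) (hyz : G.Adj y z) (hne : x ≠ z) :
    (G.farFrom {x, y, z}).ncard + 2 ≤ 2 * s :=
  hG.colorable_two.ncard_add_two_le fun _ hA hind =>
    ncard_lt_of_hFree_sP1P3 hfree hxy hyz (hG.not_adj_of_adj_of_adj hxy hyz) hne hind hA

section DeleteIncidenceSet

variable {r : V} {C : (G.deleteIncidenceSet r).ConnectedComponent}

lemma eq_of_reachable_deleteIncidenceSet {w : V} (h : (G.deleteIncidenceSet r).Reachable r w) :
    w = r := by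
  obtain ⟨p⟩ := h
  cases p with
  | nil => rfl
  | cons hadj _ => exact absurd rfl (deleteIncidenceSet_adj.1 hadj).2.1

lemma notMem_supp_connectedComponentMk_deleteIncidenceSet {v : V} (hv : v ≠ r) :
    r ∉ ((G.deleteIncidenceSet r).connectedComponentMk v).supp := fun h =>
  hv (eq_of_reachable_deleteIncidenceSet (ConnectedComponent.exact h))

lemma not_adj_of_mem_supp_of_notMem_supp (hrC : r ∉ C.supp) {w u : V} (hw : w ∈ C.supp)
    (hu : u ∉ C.supp) (hur : u ≠ r) : ¬ G.Adj w u := fun h =>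
  hu <| C.mem_supp_of_adj_mem_supp hw <|
    deleteIncidenceSet_adj.2 ⟨h, ne_of_mem_of_not_mem hw hrC, hur⟩

lemma compl_sdiff_singleton_subset_farFrom (hrC : r ∉ C.supp) {S : Set V} (hS : S ⊆ C.supp) :
    C.suppᶜ \ {r} ⊆ G.farFrom S := by
  rintro w ⟨hw, hwr⟩ u hu
  exact ⟨(ne_of_mem_of_not_mem (hS hu) hw).symm, fun h =>
    not_adj_of_mem_supp_of_notMem_supp hrC (hS hu) hw hwr h.symm⟩

lemma sdiff_neighborSet_subset_farFrom (hrC : r ∉ C.supp) {S : Set V} (hS : S ⊆ C.suppᶜ) :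
    C.supp \ G.neighborSet r ⊆ G.farFrom S := by
  rintro w ⟨hw, hwr⟩ u hu
  refine ⟨ne_of_mem_of_not_mem hw (hS hu), fun h => ?_⟩
  obtain rfl | hur := eq_or_ne u r
  · exact hwr h.symm
  · exact not_adj_of_mem_supp_of_notMem_supp hrC hw (hS hu) hur h

lemma IsAcyclic.subsingleton_supp_inter_neighborSet (hG : G.IsAcyclic) :
    (C.supp ∩ G.neighborSet r).Subsingleton := by
  rintro t ⟨ht, hrt⟩ t' ⟨ht', hrt'⟩
  by_contra hne
  have hle : G.deleteIncidenceSet r ≤ G.deleteEdges {s(r, t)} := fun a b h => by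
    obtain ⟨hab, har, hbr⟩ := deleteIncidenceSet_adj.1 h
    simp [hab, har, hbr]
  -- the walk `r - t' ⇝ t` avoids the edge `rt`, which is a bridge
  refine isBridge_iff.1 (isAcyclic_iff_forall_adj_isBridge.1 hG hrt) ?_
  exact (Adj.reachable (deleteEdges_adj.2 ⟨hrt', by simp [Ne.symm hne, hrt'.ne']⟩)).trans
    ((C.reachable_of_mem_supp ht' ht).mono hle)

variable [Finite V] {s : ℕ}

lemma IsAcyclic.exists_adj_adj_notMem_supp (hG : G.IsAcyclic) (hr : 3 ≤ (G.neighborSet r).ncard) :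
    ∃ u u', G.Adj r u ∧ G.Adj r u' ∧ u ≠ u' ∧ u ∉ C.supp ∧ u' ∉ C.supp := by
  have hsplit := Set.ncard_inter_add_ncard_sdiff_eq_ncard (G.neighborSet r) C.supp
  have hinside :=
    Set.ncard_le_one_iff_subsingleton.2 (hG.subsingleton_supp_inter_neighborSet (C := C))
  rw [Set.inter_comm] at hsplit
  obtain ⟨u, u', ⟨hru, huC⟩, ⟨hru', hu'C⟩, huu'⟩ :=
    (Set.one_lt_ncard_iff).1 (show 1 < (G.neighborSet r \ C.supp).ncard by omega)
  exact ⟨u, u', hru, hru', huu', huC, hu'C⟩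

theorem IsAcyclic.ncard_supp_add_one_le (hG : G.IsAcyclic) (hfree : HFree (sP1P3 s) G)
    (hrC : r ∉ C.supp) {u u' : V} (hru : G.Adj r u) (hru' : G.Adj r u') (huu' : u ≠ u')
    (huC : u ∉ C.supp) (hu'C : u' ∉ C.supp) : C.supp.ncard + 1 ≤ 2 * s := by
  have hfar : C.supp \ G.neighborSet r ⊆ G.farFrom {u, r, u'} :=
    sdiff_neighborSet_subset_farFrom hrC (by simp [Set.insert_subset_iff, huC, hrC, hu'C])
  have := Set.ncard_inter_add_ncard_sdiff_eq_ncard C.supp (G.neighborSet r)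
  have := Set.ncard_le_one_iff_subsingleton.2 (hG.subsingleton_supp_inter_neighborSet (C := C))
  have := Set.ncard_le_ncard hfar
  have := hG.ncard_farFrom_add_two_le hfree hru.symm hru' huu'
  omega

theorem IsAcyclic.ncard_compl_supp_add_one_le (hG : G.IsAcyclic) (hfree : HFree (sP1P3 s) G)
    (hrC : r ∉ C.supp) {a v b : V} (hav : G.Adj a v) (hvb : G.Adj v b) (hab : a ≠ b)
    (haC : a ∈ C.supp) (hvC : v ∈ C.supp) (hbC : b ∈ C.supp) :
    C.suppᶜ.ncard + 1 ≤ 2 * s := by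
  have hfar : C.suppᶜ \ {r} ⊆ G.farFrom {a, v, b} :=
    compl_sdiff_singleton_subset_farFrom hrC (by simp [Set.insert_subset_iff, haC, hvC, hbC])
  have := Set.ncard_le_ncard_sdiff_add_ncard C.suppᶜ {r}
  have := Set.ncard_le_ncard hfar
  have := hG.ncard_farFrom_add_two_le hfree hav hvb hab
  rw [Set.ncard_singleton] at *
  omega

end DeleteIncidenceSet

end SimpleGraph

theorem stmt_5_general {V : Type*} [Fintype V] (s : ℕ) (R : SimpleGraph V)
    (htree : R.IsTree) (hfree : HFree (sP1P3 s) R) (r : V)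
    (hr : 3 ≤ (R.neighborSet r).ncard)
    (hsub : ∃ v : {u : V // u ≠ r},
      2 ≤ ((R.induce {u : V | u ≠ r}).neighborSet v).ncard) :
    Fintype.card V ≤ 4 * s - 2 := by
  obtain ⟨⟨v, hvr⟩, hv⟩ := hsub
  obtain ⟨⟨a, har⟩, ⟨b, hbr⟩, hva, hvb, hab⟩ := (Set.one_lt_ncard_iff).1 hv
  replace hva : R.Adj v a := hva
  replace hvb : R.Adj v b := hvb
  set C := (R.deleteIncidenceSet r).connectedComponentMk v
  have hrC : r ∉ C.supp := notMem_supp_connectedComponentMk_deleteIncidenceSet hvr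
  have hvC : v ∈ C.supp := rfl
  have haC := C.mem_supp_of_adj_mem_supp hvC (deleteIncidenceSet_adj.2 ⟨hva, hvr, har⟩)
  have hbC := C.mem_supp_of_adj_mem_supp hvC (deleteIncidenceSet_adj.2 ⟨hvb, hvr, hbr⟩)
  obtain ⟨u, u', hru, hru', huu', huC, hu'C⟩ := htree.isAcyclic.exists_adj_adj_notMem_supp hr
  have hC := htree.isAcyclic.ncard_supp_add_one_le hfree hrC hru hru' huu' huC hu'C
  have hCc := htree.isAcyclic.ncard_compl_supp_add_one_le hfree hrC hva.symm hvb
    (fun h => hab (Subtype.ext h)) haC hvC hbC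
  have := Set.ncard_add_ncard_compl C.supp
  rw [Nat.card_eq_fintype_card] at this
  omega

theorem stmt_5 {V : Type*} [Fintype V] (s : ℕ) (hs : 1 ≤ s) (R : SimpleGraph V)
    (htree : R.IsTree) (hfree : HFree (sP1P3 s) R) (r : V)
    (hr : 3 ≤ (R.neighborSet r).ncard)
    (hsub : ∃ v : {u : V // u ≠ r},
      2 ≤ ((R.induce {u : V | u ≠ r}).neighborSet v).ncard) :
    Fintype.card V ≤ 4 * s - 2 :=
  stmt_5_general s R htree hfree r hr hsub
end

section
/- Let G be a finite simple graph with an independent set A of vertices, and let Z be the set of vertices not in the closed neighbourhood of A. If A contains at least s vertices and G has no induced subgraph isomorphic to sP₁ + P₃, then the induced subgraph G[Z] is P₃-free, i.e., a disjoint union of complete graphs. -/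
open SimpleGraph

theorem stmt_8 {V : Type*} [Fintype V] (s : ℕ) (G : SimpleGraph V) (A : Set V)
    (hA : ∀ a ∈ A, ∀ b ∈ A, ¬ G.Adj a b)
    (hcard : s ≤ A.ncard)
    (hfree : HFree (sP1P3 s) G) :
    HFree (pathGraph 3)
      (G.induce {v : V | v ∉ A ∧ ∀ a ∈ A, ¬ G.Adj a v}) := by
  classical
  set Z : Set V := {v : V | v ∉ A ∧ ∀ a ∈ A, ¬ G.Adj a v} with hZ
  constructor
  intro f
  -- get s distinct elements of A
  haveI : Fintype A := A.toFinite.fintype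
  have hcard' : Fintype.card (Fin s) ≤ Fintype.card A := by
    rw [Fintype.card_fin]
    rwa [← Nat.card_coe_set_eq, Nat.card_eq_fintype_card] at hcard
  obtain ⟨g⟩ := Function.Embedding.nonempty_of_card_le hcard'
  -- the combined map
  let F : Fin s ⊕ Fin 3 → V := Sum.elim (fun k => (g k : V)) (fun i => ((f i : Z) : V))
  have hFinj : Function.Injective F := by
    rintro (k | i) (l | j) h
    · simp only [F, Sum.elim_inl] at h
      have := g.injective (Subtype.ext h); rw [this]
    · simp only [F, Sum.elim_inl, Sum.elim_inr] at h
      exact absurd (h ▸ (g k).2) (f j).2.1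
    · simp only [F, Sum.elim_inl, Sum.elim_inr] at h
      exact absurd (h ▸ (g l).2) (f i).2.1
    · simp only [F, Sum.elim_inr] at h
      have := f.injective (Subtype.ext h); rw [this]
  have hmap : ∀ a b, G.Adj (F a) (F b) ↔ (sP1P3 s).Adj a b := by
    rintro (k | i) (l | j)
    · constructor
      · intro h; exact absurd h (hA _ (g k).2 _ (g l).2)
      · rintro ⟨-, (⟨i, j, h1, -⟩ | ⟨i, j, h1, -⟩)⟩ <;> exact absurd h1 (by simp)
    · constructor
      · intro h
        simp only [F, Sum.elim_inl, Sum.elim_inr] at h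
        exact absurd h ((f j).2.2 _ (g k).2)
      · rintro ⟨-, (⟨i', j', h1, -⟩ | ⟨i', j', -, h1, -⟩)⟩ <;> exact absurd h1 (by simp)
    · constructor
      · intro h
        simp only [F, Sum.elim_inl, Sum.elim_inr] at h
        exact absurd h.symm ((f i).2.2 _ (g l).2)
      · rintro ⟨-, (⟨i', j', -, h1, -⟩ | ⟨i', j', h1, -⟩)⟩ <;> exact absurd h1 (by simp)
    · have hf : G.Adj ((f i : Z) : V) ((f j : Z) : V) ↔ (pathGraph 3).Adj i j := by
        rw [← f.map_rel_iff]; rfl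
      simp only [F, Sum.elim_inr]
      rw [hf, pathGraph_adj, sP1P3, fromRel_adj]
      constructor
      · intro h
        refine ⟨?_, ?_⟩
        · intro hc
          have : i = j := by injection hc
          subst this; omega
        · rcases h with h | h
          · exact Or.inl ⟨i, j, rfl, rfl, h⟩
          · exact Or.inr ⟨j, i, rfl, rfl, h⟩
      · rintro ⟨-, (⟨i', j', h1, h2, h3⟩ | ⟨i', j', h1, h2, h3⟩)⟩
        · injection h1 with h1; injection h2 with h2; subst h1; subst h2; exact Or.inl h3
        · injection h1 with h1; injection h2 with h2; subst h1; subst h2; exact Or.inr h3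
  exact hfree.elim ⟨⟨F, hFinj⟩, hmap _ _⟩
end

section
/- Let G be a finite simple graph, T ⊆ V(G), and suppose S ⊆ V(G) is a set such that G − S has no odd cycle through T. Let A ⊆ T \ S be an independent set of size at least 2s−1 (with s ≥ 1), and suppose G is (sP₁+P₃)-free. If y is a vertex of V(G) \ S with at least two neighbours in A, then y has at least s neighbours in A. -/
open SimpleGraph

theorem stmt_10 {V : Type*} [Fintype V] (s : ℕ) (hs : 1 ≤ s)
    (G : SimpleGraph V) (T S : Set V)
    (hS : ∀ (u : V) (c : G.Walk u u), c.IsCycle → Odd c.length →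
      (∃ t ∈ T, t ∈ c.support) → ∃ v ∈ S, v ∈ c.support)
    (A : Set V) (hAT : A ⊆ T \ S)
    (hA : ∀ a ∈ A, ∀ b ∈ A, ¬ G.Adj a b)
    (hcard : 2 * s - 1 ≤ A.ncard)
    (hfree : HFree (sP1P3 s) G)
    (y : V) (hy : y ∉ S)
    (h2 : 2 ≤ (A ∩ G.neighborSet y).ncard) :
    s ≤ (A ∩ G.neighborSet y).ncard := by
  classical
  by_contra hcon
  push_neg at hcon
  obtain ⟨a, b, ha, hb, hab⟩ := (Set.one_lt_ncard_iff (Set.toFinite _)).mp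
    (lt_of_lt_of_le one_lt_two h2)
  have haA : a ∈ A := ha.1
  have hbA : b ∈ A := hb.1
  have hya : G.Adj y a := ha.2
  have hyb : G.Adj y b := hb.2
  have hyA : y ∉ A := fun hyA => hA y hyA a haA hya
  have hsplit : (A ∩ G.neighborSet y).ncard + (A \ G.neighborSet y).ncard = A.ncard :=
    Set.ncard_inter_add_ncard_diff_eq_ncard A _ (Set.toFinite _)
  have hs' : s ≤ (A \ G.neighborSet y).ncard := by omega
  have hfin : (A \ G.neighborSet y).Finite := Set.toFinite _
  rw [Set.ncard_eq_toFinset_card _ hfin] at hs'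
  obtain ⟨F, hF, hFcard⟩ := Finset.exists_subset_card_eq hs'
  have hFmem : ∀ v ∈ F, v ∈ A ∧ v ∉ G.neighborSet y := by
    intro v hv
    have := hfin.mem_toFinset.mp (hF hv)
    exact ⟨this.1, this.2⟩
  let e : Fin s ≃ {x // x ∈ F} := (F.equivFinOfCardEq hFcard).symm
  let f : Fin s ⊕ Fin 3 → V := Sum.elim (fun i => (e i : V)) ![a, y, b]
  have hcA : ∀ i : Fin s, (e i : V) ∈ A := fun i => (hFmem _ (e i).2).1
  have hcN : ∀ i : Fin s, ¬ G.Adj y (e i : V) := fun i => (hFmem _ (e i).2).2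
  have hne_a : ∀ i : Fin s, (e i : V) ≠ a := fun i h => hcN i (h ▸ hya)
  have hne_y : ∀ i : Fin s, (e i : V) ≠ y := fun i h => hyA (h ▸ hcA i)
  have hne_b : ∀ i : Fin s, (e i : V) ≠ b := fun i h => hcN i (h ▸ hyb)
  have hy_a : y ≠ a := hya.ne
  have hy_b : y ≠ b := hyb.ne
  have hcne : ∀ i : Fin s, ∀ j3 : Fin 3, (e i : V) ≠ ![a, y, b] j3 := by
    intro i j3
    fin_cases j3
    · exact hne_a i
    · exact hne_y i
    · exact hne_b i
  have hinj : Function.Injective f := by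
    rintro (i | i3) (j | j3) h
    · simp only [f, Sum.elim_inl] at h
      exact congrArg Sum.inl (e.injective (Subtype.ext h))
    · exact absurd h (hcne i j3)
    · exact absurd h.symm (hcne j i3)
    · simp only [f, Sum.elim_inr] at h
      congr 1
      fin_cases i3 <;> fin_cases j3 <;> simp_all
  -- adjacency facts among a y b and the e i
  have hAadj : ∀ u ∈ A, ∀ v ∈ A, ¬ G.Adj u v := hA
  have hmap : ∀ x x' : Fin s ⊕ Fin 3, G.Adj (f x) (f x') ↔ (sP1P3 s).Adj x x' := by
    have hadj3 : ∀ i3 j3 : Fin 3,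
        G.Adj (![a, y, b] i3) (![a, y, b] j3) ↔ (sP1P3 s).Adj (Sum.inr i3 : Fin s ⊕ Fin 3) (Sum.inr j3) := by
      intro i3 j3
      fin_cases i3 <;> fin_cases j3 <;>
        simp only [sP1P3, fromRel_adj, Matrix.cons_val_zero, Matrix.cons_val_one,
          Matrix.head_cons, Matrix.cons_val_two, Matrix.tail_cons]
      · simp [G.irrefl]
      · constructor
        · intro _; refine ⟨by simp, Or.inl ⟨0, 1, rfl, rfl, rfl⟩⟩
        · intro _; exact hya.symm
      · constructor
        · intro hadj; exact absurd hadj (hAadj a haA b hbA)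
        · rintro ⟨-, (⟨i, j, hi, hj, hij⟩ | ⟨i, j, hi, hj, hij⟩)⟩ <;>
            · injection hi with hi'; injection hj with hj'; subst hi'; subst hj'; simp at hij
      · constructor
        · intro _; refine ⟨by simp, Or.inr ⟨0, 1, rfl, rfl, rfl⟩⟩
        · intro _; exact hya
      · simp [G.irrefl]
      · constructor
        · intro _; refine ⟨by simp, Or.inl ⟨1, 2, rfl, rfl, rfl⟩⟩
        · intro _; exact hyb
      · constructor
        · intro hadj; exact absurd hadj.symm (hAadj a haA b hbA)
        · rintro ⟨-, (⟨i, j, hi, hj, hij⟩ | ⟨i, j, hi, hj, hij⟩)⟩ <;>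
            · injection hi with hi'; injection hj with hj'; subst hi'; subst hj'; simp at hij
      · constructor
        · intro _; refine ⟨by simp, Or.inr ⟨1, 2, rfl, rfl, rfl⟩⟩
        · intro _; exact hyb.symm
      · simp [G.irrefl]
    rintro (i | i3) (j | j3)
    · simp only [f, Sum.elim_inl]
      constructor
      · intro hadj; exact absurd hadj (hAadj _ (hcA i) _ (hcA j))
      · intro hadj
        simp only [sP1P3, fromRel_adj] at hadj
        obtain ⟨-, (⟨_, _, hi, -, -⟩ | ⟨_, _, hi, -, -⟩)⟩ := hadj <;> exact absurd hi (by simp)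
    · simp only [f, Sum.elim_inl, Sum.elim_inr]
      constructor
      · intro hadj
        exfalso
        fin_cases j3
        · exact hAadj _ (hcA i) a haA hadj
        · exact hcN i hadj.symm
        · exact hAadj _ (hcA i) b hbA hadj
      · intro hadj
        simp only [sP1P3, fromRel_adj] at hadj
        obtain ⟨-, (⟨_, _, hi, -, -⟩ | ⟨_, _, -, hi, -⟩)⟩ := hadj <;> exact absurd hi (by simp)
    · simp only [f, Sum.elim_inl, Sum.elim_inr]
      constructor
      · intro hadj
        exfalso
        fin_cases i3
        · exact hAadj _ (hcA j) a haA hadj.symm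
        · exact hcN j hadj
        · exact hAadj _ (hcA j) b hbA hadj.symm
      · intro hadj
        simp only [sP1P3, fromRel_adj] at hadj
        obtain ⟨-, (⟨_, _, -, hi, -⟩ | ⟨_, _, hi, -, -⟩)⟩ := hadj <;> exact absurd hi (by simp)
    · exact hadj3 i3 j3
  exact hfree.elim ⟨⟨f, hinj⟩, fun {x x'} => hmap x x'⟩
end

section
/- Let G be a finite simple (sP₁+P₃)-free graph for some s ≥ 1, let A be an independent set of vertices of G with |A| ≥ 2s−1, and let y₁, y₂ be distinct vertices outside A each having at least two neighbours in A. Then y₁ and y₂ have a common neighbour in A. -/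
open SimpleGraph

lemma key {V : Type*} [Fintype V] (s : ℕ) (hs : 1 ≤ s)
    (G : SimpleGraph V) (hfree : HFree (sP1P3 s) G)
    (A : Set V) (hA : ∀ a ∈ A, ∀ b ∈ A, ¬ G.Adj a b)
    (y : V) (hy : y ∉ A)
    (h1 : 2 ≤ (A ∩ G.neighborSet y).ncard) :
    (A \ G.neighborSet y).ncard ≤ s - 1 := by
  by_contra hcon
  push_neg at hcon
  have hsle : s ≤ (A \ G.neighborSet y).ncard := by omega
  obtain ⟨B, hB, hBcard⟩ := Set.exists_subset_card_eq hsle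
  -- two distinct neighbours of y in A
  have hfin : (A ∩ G.neighborSet y).Finite := Set.toFinite _
  obtain ⟨a, b, ha, hb, hab⟩ := (Set.one_lt_ncard_iff hfin).mp (by omega)
  have haA : a ∈ A := ha.1
  have hbA : b ∈ A := hb.1
  have hay : G.Adj y a := ha.2
  have hby : G.Adj y b := hb.2
  have hBfin : B.Finite := Set.toFinite _
  haveI : Fintype B := hBfin.fintype
  have hBc : Fintype.card B = s := by
    rw [← Nat.card_coe_set_eq, Nat.card_eq_fintype_card] at hBcard
    exact hBcard
  let e : Fin s ≃ B := (Fintype.equivFinOfCardEq hBc).symm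
  have hBA : ∀ i : Fin s, ((e i : V) ∈ A ∧ (e i : V) ∉ G.neighborSet y) := by
    intro i
    exact ⟨(hB (e i).2).1, (hB (e i).2).2⟩
  let f : Fin s ⊕ Fin 3 → V := Sum.elim (fun i => (e i : V)) (![a, y, b])
  have hfinj : Function.Injective f := by
    rintro (i | i) (j | j) h
    · simp only [f, Sum.elim_inl] at h
      have := e.injective (Subtype.ext h)
      rw [this]
    · exfalso
      simp only [f, Sum.elim_inl, Sum.elim_inr] at h
      have hi := hBA i
      fin_cases j <;> simp at h
      · exact hi.2 (h ▸ ha.2)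
      · exact hy (h ▸ hi.1)
      · exact hi.2 (h ▸ hb.2)
    · exfalso
      simp only [f, Sum.elim_inl, Sum.elim_inr] at h
      have hj := hBA j
      fin_cases i <;> simp at h
      · exact hj.2 (h ▸ ha.2)
      · exact hy (h ▸ hj.1)
      · exact hj.2 (h ▸ hb.2)
    · simp only [f, Sum.elim_inr] at h
      congr 1
      have hya : y ≠ a := fun h' => hy (h' ▸ haA)
      have hyb : y ≠ b := fun h' => hy (h' ▸ hbA)
      fin_cases i <;> fin_cases j <;> simp_all <;> omega
  have hmap : ∀ u v, G.Adj (f u) (f v) ↔ (sP1P3 s).Adj u v := by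
    have hP3 : ∀ i j : Fin 3, (sP1P3 s).Adj (Sum.inr i) (Sum.inr j) ↔
        (i ≠ j ∧ ((i : ℕ) + 1 = j ∨ (j : ℕ) + 1 = i)) := by
      intro i j
      simp [sP1P3, SimpleGraph.fromRel_adj]
      try aesop
    have hnoleft : ∀ (u : Fin s ⊕ Fin 3) (i : Fin s),
        ¬ (sP1P3 s).Adj (Sum.inl i) u ∧ ¬ (sP1P3 s).Adj u (Sum.inl i) := by
      intro u i
      constructor <;>
      · intro h
        simp [sP1P3, SimpleGraph.fromRel_adj] at h
        try aesop
    rintro (i | i) (j | j)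
    · simp only [f, Sum.elim_inl]
      constructor
      · intro h; exact absurd h (hA _ (hBA i).1 _ (hBA j).1)
      · intro h; exact absurd h (hnoleft (Sum.inl j) i).1
    · simp only [f, Sum.elim_inl, Sum.elim_inr]
      constructor
      · intro h
        exfalso
        have hi := hBA i
        fin_cases j <;> simp at h
        · exact hA _ hi.1 _ haA h
        · exact hi.2 h.symm
        · exact hA _ hi.1 _ hbA h
      · intro h; exact absurd h (hnoleft _ i).1
    · simp only [f, Sum.elim_inl, Sum.elim_inr]
      constructor
      · intro h
        exfalso
        have hj := hBA j
        fin_cases i <;> simp at h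
        · exact hA _ haA _ hj.1 h
        · exact hj.2 h
        · exact hA _ hbA _ hj.1 h
      · intro h; exact absurd h (hnoleft _ j).2
    · simp only [f, Sum.elim_inr]
      rw [hP3]
      have hab' : ¬ G.Adj a b := hA _ haA _ hbA
      fin_cases i <;> fin_cases j <;>
        simp_all [G.adj_comm, G.irrefl] <;> omega
  exact hfree.false ⟨⟨f, hfinj⟩, @fun u v => hmap u v⟩

theorem stmt_11 {V : Type*} [Fintype V] (s : ℕ) (hs : 1 ≤ s)
    (G : SimpleGraph V) (hfree : HFree (sP1P3 s) G)
    (A : Set V) (hA : ∀ a ∈ A, ∀ b ∈ A, ¬ G.Adj a b)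
    (hcard : 2 * s - 1 ≤ A.ncard)
    (y₁ y₂ : V) (hne : y₁ ≠ y₂) (hy₁ : y₁ ∉ A) (hy₂ : y₂ ∉ A)
    (h1 : 2 ≤ (A ∩ G.neighborSet y₁).ncard)
    (h2 : 2 ≤ (A ∩ G.neighborSet y₂).ncard) :
    ∃ a ∈ A, G.Adj y₁ a ∧ G.Adj y₂ a := by
  by_contra hcon
  push_neg at hcon
  have k1 := key s hs G hfree A hA y₁ hy₁ h1
  have hsub : A ∩ G.neighborSet y₁ ⊆ A \ G.neighborSet y₂ := by
    rintro x ⟨hxA, hx1⟩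
    exact ⟨hxA, fun hx2 => hcon x hxA hx1 hx2⟩
  have k2 := key s hs G hfree A hA y₂ hy₂ h2
  have hle : (A ∩ G.neighborSet y₁).ncard ≤ s - 1 :=
    le_trans (Set.ncard_le_ncard hsub (Set.toFinite _)) k2
  have := Set.ncard_inter_add_ncard_diff_eq_ncard A (G.neighborSet y₁) (Set.toFinite _)
  omega
end

section
/- Let G be a finite simple (sP₁+P₃)-free graph for s ≥ 1, let T ⊆ V(G), let F be a vertex set inducing a subgraph with no T-cycle (a T-forest), and let A ⊆ F ∩ T induce a graph with exactly 2s components each of size at most 2. Then the set Y₂ of vertices of F \ A having at least two neighbours in A has size at most 1. -/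
open SimpleGraph Walk

/-- `F` induces a `T`-forest: `G[F]` has no cycle containing a vertex of `T`. -/
def InducesTForest {V : Type*} (G : SimpleGraph V) (T F : Set V) : Prop :=
  ∀ (u : V) (c : G.Walk u u), c.IsCycle → (∀ v ∈ c.support, v ∈ F) →
    ∀ t ∈ T, t ∉ c.support

lemma isCycle3' {V : Type*} {G : SimpleGraph V} {x1 x2 x3 : V} (h1 : G.Adj x1 x2)
    (h2 : G.Adj x2 x3) (h3 : G.Adj x3 x1) :
    (Walk.cons h1 (Walk.cons h2 (Walk.cons h3 Walk.nil))).IsCycle := by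
  have := h1.ne; have := h2.ne; have := h3.ne
  simp [Walk.cons_isCycle_iff, Walk.cons_isPath_iff, Sym2.eq_iff]
  aesop

lemma isCycle4' {V : Type*} {G : SimpleGraph V} {x1 x2 x3 x4 : V} (h1 : G.Adj x1 x2)
    (h2 : G.Adj x2 x3) (h3 : G.Adj x3 x4) (h4 : G.Adj x4 x1)
    (n13 : x1 ≠ x3) (n24 : x2 ≠ x4) :
    (cons h1 (cons h2 (cons h3 (cons h4 nil)))).IsCycle := by
  have := h1.ne; have := h2.ne; have := h3.ne; have := h4.ne
  simp [Walk.cons_isCycle_iff, Walk.cons_isPath_iff, Sym2.eq_iff]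
  aesop

lemma isCycle5' {V : Type*} {G : SimpleGraph V} {x1 x2 x3 x4 x5 : V} (h1 : G.Adj x1 x2)
    (h2 : G.Adj x2 x3) (h3 : G.Adj x3 x4) (h4 : G.Adj x4 x5) (h5 : G.Adj x5 x1)
    (n13 : x1 ≠ x3) (n14 : x1 ≠ x4) (n24 : x2 ≠ x4) (n25 : x2 ≠ x5) (n35 : x3 ≠ x5) :
    (cons h1 (cons h2 (cons h3 (cons h4 (cons h5 nil))))).IsCycle := by
  have := h1.ne; have := h2.ne; have := h3.ne; have := h4.ne; have := h5.ne
  simp [Walk.cons_isCycle_iff, Walk.cons_isPath_iff, Sym2.eq_iff]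
  aesop

lemma isCycle6' {V : Type*} {G : SimpleGraph V} {x1 x2 x3 x4 x5 x6 : V} (h1 : G.Adj x1 x2)
    (h2 : G.Adj x2 x3) (h3 : G.Adj x3 x4) (h4 : G.Adj x4 x5) (h5 : G.Adj x5 x6)
    (h6 : G.Adj x6 x1)
    (n13 : x1 ≠ x3) (n14 : x1 ≠ x4) (n15 : x1 ≠ x5) (n24 : x2 ≠ x4) (n25 : x2 ≠ x5)
    (n26 : x2 ≠ x6) (n35 : x3 ≠ x5) (n36 : x3 ≠ x6) (n46 : x4 ≠ x6) :
    (cons h1 (cons h2 (cons h3 (cons h4 (cons h5 (cons h6 nil)))))).IsCycle := by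
  have := h1.ne; have := h2.ne; have := h3.ne; have := h4.ne; have := h5.ne; have := h6.ne
  simp [Walk.cons_isCycle_iff, Walk.cons_isPath_iff, Sym2.eq_iff]
  aesop

lemma adj_of_same_comp {W : Type*} [Finite W] {H : SimpleGraph W} {a b : W} (hab : a ≠ b)
    (hcc : H.connectedComponentMk a = H.connectedComponentMk b)
    (hsz : (H.connectedComponentMk a).supp.ncard ≤ 2) : H.Adj a b := by
  obtain ⟨w⟩ := ConnectedComponent.exact hcc
  cases w with
  | nil => exact absurd rfl hab
  | @cons _ v _ h q =>
    have hsub : ({a, b} : Set W) ⊆ (H.connectedComponentMk a).supp := by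
      intro x hx
      rcases hx with rfl | rfl
      · simp [ConnectedComponent.mem_supp_iff]
      · simp [ConnectedComponent.mem_supp_iff, hcc.symm]
    have heq : ({a, b} : Set W) = (H.connectedComponentMk a).supp := by
      apply Set.eq_of_subset_of_ncard_le hsub
      have : ({a, b} : Set W).ncard = 2 := Set.ncard_pair hab
      omega
    have hv : v ∈ (H.connectedComponentMk a).supp := by
      rw [ConnectedComponent.mem_supp_iff]
      exact (ConnectedComponent.connectedComponentMk_eq_of_adj h).symm
    rw [← heq] at hv
    rcases hv with rfl | rfl
    · exact absurd rfl h.ne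
    · exact h

lemma sP1P3_adj_iff (s : ℕ) (x y : Fin s ⊕ Fin 3) :
    (sP1P3 s).Adj x y ↔ ∃ i j : Fin 3, x = Sum.inr i ∧ y = Sum.inr j ∧
      ((i : ℕ) + 1 = j ∨ (j : ℕ) + 1 = i) := by
  simp only [sP1P3, fromRel_adj]
  constructor
  · rintro ⟨hne, (⟨i, j, rfl, rfl, h⟩ | ⟨i, j, rfl, rfl, h⟩)⟩
    · exact ⟨i, j, rfl, rfl, Or.inl h⟩
    · exact ⟨j, i, rfl, rfl, Or.inr h⟩
  · rintro ⟨i, j, rfl, rfl, (h | h)⟩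
    · exact ⟨by rintro hh; obtain rfl := Sum.inr_injective hh; omega,
        Or.inl ⟨i, j, rfl, rfl, h⟩⟩
    · exact ⟨by rintro hh; obtain rfl := Sum.inr_injective hh; omega,
        Or.inr ⟨j, i, rfl, rfl, h⟩⟩

lemma sP1P3_adj_inr (s : ℕ) (i j : Fin 3) :
    (sP1P3 s).Adj (Sum.inr i) (Sum.inr j) ↔ ((i : ℕ) + 1 = j ∨ (j : ℕ) + 1 = i) := by
  rw [sP1P3_adj_iff]
  constructor
  · rintro ⟨i', j', hi, hj, h⟩
    obtain rfl := Sum.inr_injective hi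
    obtain rfl := Sum.inr_injective hj
    exact h
  · intro h; exact ⟨i, j, rfl, rfl, h⟩

theorem stmt_12 {V : Type*} [Fintype V] (s : ℕ) (hs : 1 ≤ s)
    (G : SimpleGraph V) (hfree : HFree (sP1P3 s) G)
    (T F : Set V) (hF : InducesTForest G T F)
    (A : Set V) (hA : A ⊆ F ∩ T)
    (hcomp : Nat.card ((G.induce A).ConnectedComponent) = 2 * s)
    (hsize : ∀ C : (G.induce A).ConnectedComponent, C.supp.ncard ≤ 2) :
    {y : V | y ∈ F \ A ∧ 2 ≤ (A ∩ G.neighborSet y).ncard}.ncard ≤ 1 := by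
  classical
  have hFinV : Finite V := Finite.of_fintype V
  set GA := G.induce A with hGAdef
  let cmp : A → GA.ConnectedComponent := fun a => GA.connectedComponentMk a
  have hAF : ∀ a : A, (a : V) ∈ F := fun a => (hA a.2).1
  have hAT : ∀ a : A, (a : V) ∈ T := fun a => (hA a.2).2
  have hGadj : ∀ a b : A, GA.Adj a b ↔ G.Adj ↑a ↑b := fun a b => by
    simp [hGAdef, comap_adj]
  have hnadj : ∀ u v : A, cmp u ≠ cmp v → ¬ G.Adj ↑u ↑v := fun u v hc hadj =>
    hc (ConnectedComponent.connectedComponentMk_eq_of_adj ((hGadj u v).mpr hadj))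
  have valne : ∀ u v : A, cmp u ≠ cmp v → (↑u : V) ≠ ↑v := fun u v hc h =>
    hc (congrArg cmp (Subtype.val_injective h))
  have hsame : ∀ a b : A, a ≠ b → cmp a = cmp b → G.Adj ↑a ↑b := fun a b hne hcc =>
    (hGadj a b).mp (adj_of_same_comp hne hcc (hsize _))
  -- Step 1: a vertex of F \ A cannot have two distinct neighbours in the same component.
  have step1 : ∀ y : V, y ∈ F → y ∉ A → ∀ a b : A, G.Adj y ↑a → G.Adj y ↑b → a ≠ b →
      cmp a ≠ cmp b := by
    intro y hyF hyA a b hya hyb hne hcc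
    have hab : G.Adj ↑a ↑b := hsame a b hne hcc
    have hc := isCycle3' hya hab hyb.symm
    refine hF y _ hc ?_ ↑a (hAT a) (by simp)
    intro v hv
    simp only [Walk.support_cons, Walk.support_nil, List.mem_cons,
      List.not_mem_nil, or_false] at hv
    rcases hv with rfl | rfl | rfl | rfl
    · exact hyF
    · exact hAF a
    · exact hAF b
    · exact hyF
  have hfinA : Finite ↥A := Subtype.finite
  have hfinCC : Finite GA.ConnectedComponent :=
    Finite.of_surjective GA.connectedComponentMk (fun C => C.exists_rep)
  let S : V → Set GA.ConnectedComponent := fun y => {C | ∃ a : A, G.Adj y ↑a ∧ cmp a = C}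
  -- Step 2: each vertex of Y₂ sees at least s+1 components.
  have step2 : ∀ y : V, y ∈ F → y ∉ A → 2 ≤ (A ∩ G.neighborSet y).ncard →
      s + 1 ≤ (S y).ncard := by
    intro y hyF hyA hdeg
    by_contra hlt
    push_neg at hlt
    obtain ⟨a0, b0, ha0, hb0, hab0⟩ := (Set.one_lt_ncard_iff (s := A ∩ G.neighborSet y) (Set.toFinite _)).mp (by omega)
    set a : A := ⟨a0, ha0.1⟩ with hadef
    set b : A := ⟨b0, hb0.1⟩ with hbdef
    have hya : G.Adj y ↑a := ha0.2
    have hyb : G.Adj y ↑b := hb0.2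
    have hne : a ≠ b := fun h => hab0 (congrArg Subtype.val h)
    have hcab : cmp a ≠ cmp b := step1 y hyF hyA a b hya hyb hne
    have haS : cmp a ∈ S y := ⟨a, hya, rfl⟩
    have hbS : cmp b ∈ S y := ⟨b, hyb, rfl⟩
    have hcompl : s ≤ (S y)ᶜ.ncard := by
      have h1 := Set.ncard_add_ncard_compl (S y)
      rw [hcomp] at h1
      omega
    obtain ⟨t, ht, htc⟩ := Finset.exists_subset_card_eq
      (s := (Set.toFinite ((S y)ᶜ)).toFinset) (n := s)
      (by rw [← Set.ncard_eq_toFinset_card]; exact hcompl)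
    let e := Finset.equivFinOfCardEq htc
    let g : Fin s → GA.ConnectedComponent := fun i => ↑(e.symm i)
    have hginj : Function.Injective g := fun i j h =>
      e.symm.injective (Subtype.val_injective h)
    have hgS : ∀ i, g i ∉ S y := fun i => by
      have := ht (e.symm i).2
      rw [Set.Finite.mem_toFinset] at this
      exact this
    let w : GA.ConnectedComponent → A := fun C => C.exists_rep.choose
    have hw : ∀ C, cmp (w C) = C := fun C => C.exists_rep.choose_spec
    have hyw : ∀ i, ¬ G.Adj y ↑(w (g i)) := fun i hadj => hgS i ⟨w (g i), hadj, hw _⟩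
    have hwa : ∀ i, cmp (w (g i)) ≠ cmp a := fun i h =>
      hgS i (by rw [← hw (g i), h]; exact haS)
    have hwb : ∀ i, cmp (w (g i)) ≠ cmp b := fun i h =>
      hgS i (by rw [← hw (g i), h]; exact hbS)
    have hww : ∀ i j : Fin s, i ≠ j → cmp (w (g i)) ≠ cmp (w (g j)) := fun i j hij => by
      rw [hw, hw]; exact fun h => hij (hginj h)
    have hvney : ∀ u : A, (↑u : V) ≠ y := fun u h => hyA (h ▸ u.2)
    let f : Fin s ⊕ Fin 3 → V := Sum.elim (fun i => ↑(w (g i))) ![↑a, y, ↑b]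
    have hf0 : f (Sum.inr 0) = ↑a := rfl
    have hf1 : f (Sum.inr 1) = y := rfl
    have hf2 : f (Sum.inr 2) = ↑b := rfl
    have hfl : ∀ i, f (Sum.inl i) = ↑(w (g i)) := fun i => rfl
    have hinj : Function.Injective f := by
      rintro (i | i) (j | j) hpq
      · have h1 : w (g i) = w (g j) := Subtype.val_injective hpq
        have h2 : g i = g j := by rw [← hw (g i), ← hw (g j), h1]
        exact congrArg Sum.inl (hginj h2)
      · exfalso
        fin_cases j
        · exact valne _ _ (hwa i) hpq
        · exact hvney _ hpq
        · exact valne _ _ (hwb i) hpq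
      · exfalso
        fin_cases i
        · exact valne _ _ (hwa j) hpq.symm
        · exact hvney _ hpq.symm
        · exact valne _ _ (hwb j) hpq.symm
      · have hay : (↑a : V) ≠ y := hvney a
        have hby : (↑b : V) ≠ y := hvney b
        have habv : (↑a : V) ≠ ↑b := valne a b hcab
        fin_cases i <;> fin_cases j
        · rfl
        · exact absurd hpq hay
        · exact absurd hpq habv
        · exact absurd hpq.symm hay
        · rfl
        · exact absurd hpq.symm hby
        · exact absurd hpq.symm habv
        · exact absurd hpq hby
        · rfl
    have hmap : ∀ p q : Fin s ⊕ Fin 3, G.Adj (f p) (f q) ↔ (sP1P3 s).Adj p q := by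
      rintro (i | i) (j | j)
      · rw [sP1P3_adj_iff]
        simp only [hfl]
        constructor
        · intro hadj
          exfalso
          by_cases h : i = j
          · subst h; exact G.irrefl hadj
          · exact hnadj _ _ (hww i j h) hadj
        · rintro ⟨_, _, h, _, _⟩; exact absurd h (by simp)
      · rw [sP1P3_adj_iff]
        constructor
        · intro hadj
          exfalso
          fin_cases j
          · exact hnadj _ _ (hwa i) hadj
          · exact hyw i hadj.symm
          · exact hnadj _ _ (hwb i) hadj
        · rintro ⟨_, _, h, _, _⟩; exact absurd h (by simp)
      · rw [sP1P3_adj_iff]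
        constructor
        · intro hadj
          exfalso
          fin_cases i
          · exact hnadj _ _ (hwa j) hadj.symm
          · exact hyw j hadj
          · exact hnadj _ _ (hwb j) hadj.symm
        · rintro ⟨_, _, _, h, _⟩; exact absurd h (by simp)
      · rw [sP1P3_adj_inr]
        have hnab : ¬ G.Adj ↑a ↑b := hnadj a b hcab
        fin_cases i <;> fin_cases j
        · exact ⟨fun h => (G.irrefl h).elim, fun h => absurd h (by decide)⟩
        · exact ⟨fun _ => Or.inl rfl, fun _ => hya.symm⟩
        · exact ⟨fun h => absurd h hnab, fun h => absurd h (by decide)⟩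
        · exact ⟨fun _ => Or.inr rfl, fun _ => hya⟩
        · exact ⟨fun h => (G.irrefl h).elim, fun h => absurd h (by decide)⟩
        · exact ⟨fun _ => Or.inl rfl, fun _ => hyb⟩
        · exact ⟨fun h => absurd h.symm hnab, fun h => absurd h (by decide)⟩
        · exact ⟨fun _ => Or.inr rfl, fun _ => hyb.symm⟩
        · exact ⟨fun h => (G.irrefl h).elim, fun h => absurd h (by decide)⟩
    exact hfree.false ⟨⟨f, hinj⟩, fun {p q} => hmap p q⟩
  -- Step 3
  by_contra hcon
  push_neg at hcon
  obtain ⟨y₁, y₂, hy₁, hy₂, hyne⟩ := (Set.one_lt_ncard_iff (Set.toFinite _)).mp hcon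
  obtain ⟨⟨hy₁F, hy₁A⟩, hdeg₁⟩ := hy₁
  obtain ⟨⟨hy₂F, hy₂A⟩, hdeg₂⟩ := hy₂
  have hS₁ := step2 y₁ hy₁F hy₁A hdeg₁
  have hS₂ := step2 y₂ hy₂F hy₂A hdeg₂
  have hunion : (S y₁ ∪ S y₂).ncard ≤ 2 * s := by
    rw [← hcomp, ← Set.ncard_univ]
    exact Set.ncard_le_ncard (Set.subset_univ _) (Set.toFinite _)
  have hinter : 2 ≤ (S y₁ ∩ S y₂).ncard := by
    have := Set.ncard_union_add_ncard_inter (S y₁) (S y₂) (Set.toFinite _) (Set.toFinite _)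
    omega
  obtain ⟨C, C', hC, hC', hCC⟩ := (Set.one_lt_ncard_iff (s := S y₁ ∩ S y₂) (Set.toFinite _)).mp (by omega)
  obtain ⟨a, hy1a, hcmpa⟩ := hC.1
  obtain ⟨b, hy2b, hcmpb⟩ := hC.2
  obtain ⟨a', hy1a', hcmpa'⟩ := hC'.1
  obtain ⟨b', hy2b', hcmpb'⟩ := hC'.2
  -- distinctness across the two components
  have hab' : (↑a : V) ≠ ↑b' := valne a b' (by rw [hcmpa, hcmpb']; exact hCC)
  have ha'b : (↑a' : V) ≠ ↑b := valne a' b (by rw [hcmpa', hcmpb]; exact fun h => hCC h.symm)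
  have haa' : (↑a : V) ≠ ↑a' := valne a a' (by rw [hcmpa, hcmpa']; exact hCC)
  have hbb' : (↑b : V) ≠ ↑b' := valne b b' (by rw [hcmpb, hcmpb']; exact hCC)
  have hvney : ∀ u : A, ∀ y, y ∉ A → (↑u : V) ≠ y := fun u y hyA h => hyA (h ▸ u.2)
  by_cases hab : a = b <;> by_cases hab2 : a' = b'
  · subst hab; subst hab2
    have hc := isCycle4' hy1a hy2b.symm hy2b' hy1a'.symm hyne haa'
    refine hF y₁ _ hc ?_ ↑a (hAT a) (by simp)
    intro v hv
    simp only [Walk.support_cons, Walk.support_nil, List.mem_cons,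
      List.not_mem_nil, or_false] at hv
    rcases hv with rfl | rfl | rfl | rfl | rfl
    · exact hy₁F
    · exact hAF a
    · exact hy₂F
    · exact hAF a'
    · exact hy₁F
  · subst hab
    have ha'b' : G.Adj ↑b' ↑a' := (hsame a' b' hab2 (hcmpa'.trans hcmpb'.symm)).symm
    have hc := isCycle5' hy1a hy2b.symm hy2b' ha'b' hy1a'.symm
      hyne (hvney b' y₁ hy₁A).symm hab' haa' (hvney a' y₂ hy₂A).symm
    refine hF y₁ _ hc ?_ ↑a (hAT a) (by simp)
    intro v hv
    simp only [Walk.support_cons, Walk.support_nil, List.mem_cons,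
      List.not_mem_nil, or_false] at hv
    rcases hv with rfl | rfl | rfl | rfl | rfl | rfl
    · exact hy₁F
    · exact hAF a
    · exact hy₂F
    · exact hAF b'
    · exact hAF a'
    · exact hy₁F
  · subst hab2
    have habG : G.Adj ↑a ↑b := hsame a b hab (hcmpa.trans hcmpb.symm)
    have hc := isCycle5' hy1a habG hy2b.symm hy2b' hy1a'.symm
      (hvney b y₁ hy₁A).symm hyne (hvney a y₂ hy₂A) haa' ha'b.symm
    refine hF y₁ _ hc ?_ ↑a (hAT a) (by simp)
    intro v hv
    simp only [Walk.support_cons, Walk.support_nil, List.mem_cons,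
      List.not_mem_nil, or_false] at hv
    rcases hv with rfl | rfl | rfl | rfl | rfl | rfl
    · exact hy₁F
    · exact hAF a
    · exact hAF b
    · exact hy₂F
    · exact hAF a'
    · exact hy₁F
  · have habG : G.Adj ↑a ↑b := hsame a b hab (hcmpa.trans hcmpb.symm)
    have ha'b' : G.Adj ↑b' ↑a' := (hsame a' b' hab2 (hcmpa'.trans hcmpb'.symm)).symm
    have hc := isCycle6' hy1a habG hy2b.symm hy2b' ha'b' hy1a'.symm
      (hvney b y₁ hy₁A).symm hyne (hvney b' y₁ hy₁A).symm (hvney a y₂ hy₂A)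
      hab' haa' hbb' ha'b.symm (hvney a' y₂ hy₂A).symm
    refine hF y₁ _ hc ?_ ↑a (hAT a) (by simp)
    intro v hv
    simp only [Walk.support_cons, Walk.support_nil, List.mem_cons,
      List.not_mem_nil, or_false] at hv
    rcases hv with rfl | rfl | rfl | rfl | rfl | rfl | rfl
    · exact hy₁F
    · exact hAF a
    · exact hAF b
    · exact hy₂F
    · exact hAF b'
    · exact hAF a'
    · exact hy₁F
end

section
/- Let G be a finite simple graph, T ⊆ V(G), and let G' be the split graph obtained from G by taking vertex set V(G) ∪ E(G), making V(G) a clique, keeping E(G) an independent set, and joining each e ∈ E(G) to its two endpoints. Then G has a vertex cover of size at most k if and only if G' has an odd E(G)-cycle transversal of size at most k. -/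
open SimpleGraph

/-- The split graph obtained from `G`: vertex set `V(G) ∪ E(G)`, with `V(G)` a clique,
`E(G)` an independent set, and each edge joined to its two endpoints. -/
def splitG {V : Type*} (G : SimpleGraph V) : SimpleGraph (V ⊕ G.edgeSet) where
  Adj a b :=
    match a, b with
    | Sum.inl u, Sum.inl v => u ≠ v
    | Sum.inl u, Sum.inr e => u ∈ (e : Sym2 V)
    | Sum.inr e, Sum.inl u => u ∈ (e : Sym2 V)
    | Sum.inr _, Sum.inr _ => False
  symm := by
    constructor
    rintro (u | e) (v | f) h <;> first | exact h.symm | exact h | exact h.elim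
  loopless := by
    constructor
    rintro (u | e) h
    exacts [h rfl, h]

/-!
A vertex cover of `G` is a transversal: an odd cycle of `splitG G` through an edge vertex `uv`
enters and leaves it through `u` and `v`. Conversely, each edge `uv` spans the odd triangle
`u, v, uv`, which a transversal must meet; moving every edge vertex of the transversal to one
of its endpoints yields a vertex cover of no larger size.
-/

namespace splitG

variable {V : Type*} {G : SimpleGraph V}

@[simp] lemma adj_inl_inl {u v : V} : (splitG G).Adj (.inl u) (.inl v) ↔ u ≠ v := .rfl

@[simp] lemma adj_inl_inr {u : V} {e : G.edgeSet} :
    (splitG G).Adj (.inl u) (.inr e) ↔ u ∈ (e : Sym2 V) := .rfl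

@[simp] lemma adj_inr_inl {e : G.edgeSet} {u : V} :
    (splitG G).Adj (.inr e) (.inl u) ↔ u ∈ (e : Sym2 V) := .rfl

@[simp] lemma not_adj_inr_inr {e f : G.edgeSet} : ¬(splitG G).Adj (.inr e) (.inr f) := id

lemma exists_eq_inl_of_adj_inr {e : G.edgeSet} {b : V ⊕ G.edgeSet}
    (h : (splitG G).Adj (.inr e) b) : ∃ w ∈ (e : Sym2 V), b = .inl w := by
  cases b with
  | inl w => exact ⟨w, adj_inr_inl.mp h, rfl⟩
  | inr f => exact (not_adj_inr_inr h).elim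

/-- A cycle through an edge vertex `e` enters and leaves it through its two distinct
neighbours, which are exactly the endpoints of `e`. -/
lemma inl_mem_support_of_inr_mem_support {x : V ⊕ G.edgeSet} {c : (splitG G).Walk x x}
    (hc : c.IsCycle) {e : G.edgeSet} (he : Sum.inr e ∈ c.support) {u : V}
    (hu : u ∈ (e : Sym2 V)) : Sum.inl u ∈ c.support := by
  classical
  set c' := c.rotate _ he
  have hc' : c'.IsCycle := hc.rotate he
  obtain ⟨a, ha, hsnd⟩ := exists_eq_inl_of_adj_inr (c'.adj_snd hc'.not_nil)
  obtain ⟨b, hb, hpen⟩ := exists_eq_inl_of_adj_inr (c'.adj_penultimate hc'.not_nil).symm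
  have hab : a ≠ b := by
    rintro rfl
    exact hc'.snd_ne_penultimate (hsnd.trans hpen.symm)
  have he_eq : (e : Sym2 V) = s(a, b) := (Sym2.mem_and_mem_iff hab).mp ⟨ha, hb⟩
  rw [he_eq, Sym2.mem_iff] at hu
  rw [← c.mem_support_rotate_iff _ he]
  rcases hu with rfl | rfl
  · exact hsnd ▸ c'.getVert_mem_support 1
  · exact hpen ▸ c'.getVert_mem_support _

def triangle {u v : V} (h : G.Adj u v) : (splitG G).Walk (Sum.inl u) (Sum.inl u) :=
  .cons (adj_inl_inl.mpr h.ne) <|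
    .cons (adj_inl_inr (e := ⟨s(u, v), h⟩).mpr (Sym2.mem_mk_right u v)) <|
      .cons (adj_inr_inl.mpr (Sym2.mem_mk_left u v)) .nil

lemma triangle_isCycle {u v : V} (h : G.Adj u v) : (triangle h).IsCycle := by
  simp [triangle, Walk.isCycle_def, Walk.isTrail_def, h.ne, h.ne.symm]

lemma triangle_length {u v : V} (h : G.Adj u v) : (triangle h).length = 3 := rfl

lemma triangle_support {u v : V} (h : G.Adj u v) :
    (triangle h).support = [Sum.inl u, Sum.inl v, Sum.inr ⟨s(u, v), h⟩, Sum.inl u] := rfl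

noncomputable def toVertex : V ⊕ G.edgeSet → V :=
  Sum.elim id fun e ↦ (e : Sym2 V).out.1

lemma toVertex_mem_of_mem_support_triangle {u v : V} (h : G.Adj u v) {y : V ⊕ G.edgeSet}
    (hy : y ∈ (triangle h).support) : toVertex y = u ∨ toVertex y = v := by
  rw [triangle_support] at hy
  simp only [List.mem_cons, List.not_mem_nil, or_false] at hy
  rcases hy with rfl | rfl | rfl | rfl
  · exact .inl rfl
  · exact .inr rfl
  · exact Sym2.mem_iff.mp (Sym2.out_fst_mem _)
  · exact .inl rfl

end splitG

open splitG in
theorem stmt_19_general {V : Type*}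
    (G : SimpleGraph V) (k : ℕ) :
    (∃ S : Finset V, S.card ≤ k ∧
        ∀ u v : V, G.Adj u v → (u ∈ S ∨ v ∈ S)) ↔
    (∃ S : Finset (V ⊕ G.edgeSet), S.card ≤ k ∧
        ∀ (x : V ⊕ G.edgeSet) (c : (splitG G).Walk x x), c.IsCycle → Odd c.length →
          (∃ e : G.edgeSet, Sum.inr e ∈ c.support) →
          ∃ y ∈ S, y ∈ c.support) := by
  classical
  constructor
  · rintro ⟨S, hcard, hcover⟩
    refine ⟨S.map .inl, by simpa using hcard, ?_⟩
    rintro x c hc - ⟨⟨e, he⟩, he_mem⟩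
    induction e using Sym2.ind with | _ u v =>
    have hu := inl_mem_support_of_inr_mem_support hc he_mem (Sym2.mem_mk_left u v)
    have hv := inl_mem_support_of_inr_mem_support hc he_mem (Sym2.mem_mk_right u v)
    rcases hcover u v he with hS | hS
    · exact ⟨.inl u, by simpa using hS, hu⟩
    · exact ⟨.inl v, by simpa using hS, hv⟩
  · rintro ⟨S, hcard, htransversal⟩
    refine ⟨S.image toVertex, Finset.card_image_le.trans hcard, fun u v h ↦ ?_⟩
    obtain ⟨y, hyS, hy⟩ := htransversal _ (triangle h) (triangle_isCycle h)
      (triangle_length h ▸ by decide) ⟨⟨s(u, v), h⟩, by simp [triangle_support]⟩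
    rcases toVertex_mem_of_mem_support_triangle h hy with hyu | hyv
    · exact .inl (hyu ▸ Finset.mem_image_of_mem _ hyS)
    · exact .inr (hyv ▸ Finset.mem_image_of_mem _ hyS)

theorem stmt_19 {V : Type*} [Fintype V] [DecidableEq V]
    (G : SimpleGraph V) (k : ℕ) (hk : 1 ≤ k) :
    (∃ S : Finset V, S.card ≤ k ∧
        ∀ u v : V, G.Adj u v → (u ∈ S ∨ v ∈ S)) ↔
    (∃ S : Finset (V ⊕ G.edgeSet), S.card ≤ k ∧
        ∀ (x : V ⊕ G.edgeSet) (c : (splitG G).Walk x x), c.IsCycle → Odd c.length →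
          (∃ e : G.edgeSet, Sum.inr e ∈ c.support) →
          ∃ y ∈ S, y ∈ c.support) :=
  stmt_19_general G k
end
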